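/- If D is a digraph with vertex set [d] = {1,…,d}, then Ξ_D(x;0) = Σ_{π ∈ S_d} Q_{S(π),d}(x), where S_d is the symmetric group on [d] and S(π) = { i ∈ [d−1] : (π_i, π_{i+1}) is not an edge of D }. -/

import Mathlib

open scoped Classical
open Finset Relation

noncomputable section

/-- The multiset of nonzero exponents of a monomial. -/
def expShape {σ : Type*} (d : σ →₀ ℕ) : Multiset ℕ := d.support.val.map d

/-- The monomial symmetric function `m_lam` in the variables satisfying `P`,
as a formal power series in countably many commuting variables indexed by `σ`. -/
def msfP {σ : Type*} (P : σ → Prop) (lam : Multiset ℕ) : MvPowerSeries σ ℚ :=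
  fun d => if (∀ s ∈ d.support, P s) ∧ expShape d = lam then 1 else 0

/-- `∏_i r_i!` where `r_i` is the number of parts of `lam` equal to `i`. -/
def rfact (lam : Multiset ℕ) : ℕ :=
  lam.toFinset.prod fun i => (lam.count i).factorial

/-- The augmented monomial symmetric function `m̃_lam` in the variables satisfying `P`. -/
def maugP {σ : Type*} (P : σ → Prop) (lam : Multiset ℕ) : MvPowerSeries σ ℚ :=
  (rfact lam : ℚ) • msfP P lam

/-- The power sum symmetric function `p_lam` in the variables satisfying `P`. -/
def ppP {σ : Type*} (P : σ → Prop) (lam : Multiset ℕ) : MvPowerSeries σ ℚ :=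
  (lam.map fun n => msfP P ({n} : Multiset ℕ)).prod

/-- `sgn λ = (-1)^(|λ| - ℓ(λ))`. -/
def psgn (lam : Multiset ℕ) : ℚ := (-1 : ℚ) ^ (lam.sum - Multiset.card lam)

/-- The `x`-variables inside the two-variable-family ring. -/
def xVar : ℕ ⊕ ℕ → Prop := fun s => s.isLeft = true

/-- The `y`-variables inside the two-variable-family ring. -/
def yVar : ℕ ⊕ ℕ → Prop := fun s => s.isRight = true

/-- A path-cycle cover of the digraph with vertex set `V` and edge set `E`, encoded by its
(injective, partially defined) successor function.  The connected components of such a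
spanning subgraph are exactly directed paths and directed cycles. -/
structure PCC {V : Type*} [Fintype V] [DecidableEq V] (E : Finset (V × V)) where
  next : V → Option V
  mem_edges : ∀ u v, next u = some v → (u, v) ∈ E
  inj : ∀ u u' v, next u = some v → next u' = some v → u = u'

namespace PCC

variable {V : Type*} [Fintype V] [DecidableEq V] {E : Finset (V × V)}

noncomputable instance : Fintype (PCC E) :=
  Fintype.ofInjective (fun S : PCC E => S.next) (by
    intro a b h; cases a; cases b; simp_all)

/-- Iterated successor. -/
def iterNext (S : PCC E) : ℕ → V → Option V
  | 0, v => some v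
  | n + 1, v => (iterNext S n v).bind S.next

/-- A vertex lying on one of the directed cycles of the path-cycle cover. -/
def IsCyclicVert (S : PCC E) (v : V) : Prop := ∃ k : ℕ, 0 < k ∧ iterNext S k v = some v

/-- Two vertices lie in the same connected component (path or cycle). -/
def connRel (S : PCC E) : V → V → Prop := EqvGen fun a b => S.next a = some b

/-- The connected component of a vertex. -/
def blockOf (S : PCC E) (v : V) : Finset V := univ.filter fun u => connRel S v u

/-- The partition of the vertex set into connected components. -/
def blocks (S : PCC E) : Finset (Finset V) := univ.image (blockOf S)

/-- `π(S)`: the multiset of sizes of the directed-path components. -/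
def pathType (S : PCC E) : Multiset ℕ :=
  (((blocks S).filter fun b => ¬∃ v ∈ b, IsCyclicVert S v).val).map Finset.card

/-- `σ(S)`: the multiset of sizes of the directed-cycle components. -/
def cycleType (S : PCC E) : Multiset ℕ :=
  (((blocks S).filter fun b => ∃ v ∈ b, IsCyclicVert S v).val).map Finset.card

end PCC

/-- The path-cycle symmetric function `Ξ_D(x;y)` of the digraph with vertex set `V` and
edge set `E`, as a formal power series in two countable families of variables
(the `x`-variables are indexed by `Sum.inl`, the `y`-variables by `Sum.inr`). -/
def Xi {V : Type*} [Fintype V] [DecidableEq V] (E : Finset (V × V)) :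
    MvPowerSeries (ℕ ⊕ ℕ) ℚ :=
  ∑ S : PCC E, maugP xVar (PCC.pathType S) * ppP yVar (PCC.cycleType S)

/-- Set all of the `y`-variables equal to zero: `g(x; y) ↦ g(x; 0)`. -/
def setY0 (g : MvPowerSeries (ℕ ⊕ ℕ) ℚ) : MvPowerSeries (ℕ ⊕ ℕ) ℚ := fun e =>
  if ∀ s ∈ e.support, s.isLeft = true then g e else 0

/-- The fundamental quasi-symmetric function `Q_{T,d}` in the variables `v 0, v 1, v 2, …`:
the sum of `x_{i_0} x_{i_1} ⋯ x_{i_{d-1}}` over all `i_0 ≤ i_1 ≤ ⋯ ≤ i_{d-1}` with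
`i_k < i_{k+1}` whenever `k ∈ T` (positions are 0-based). -/
def Qfun {σ : Type*} (v : ℕ → σ) (T : Finset ℕ) (d : ℕ) : MvPowerSeries σ ℚ := fun e =>
  if ∀ s ∈ e.support, ∃ m, v m = s then
    (Nat.card {f : Fin d → ℕ //
      (∀ k l : Fin d, k ≤ l → f k ≤ f l) ∧
      (∀ (k : ℕ) (h : k + 1 < d), k ∈ T → f ⟨k, Nat.lt_of_succ_lt h⟩ < f ⟨k + 1, h⟩) ∧
      ∀ m : ℕ, (Finset.univ.filter fun k => f k = m).card = e (v m)} : ℚ)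
  else 0

/-- `S(π)`: the set of (0-based) positions `k` such that `(π_k, π_{k+1})` is not an edge
of the digraph. -/
def Tset {d : ℕ} (E : Finset (Fin d × Fin d)) (π : Equiv.Perm (Fin d)) : Finset ℕ :=
  (Finset.range d).filter fun k =>
    ∃ h : k + 1 < d, (π ⟨k, Nat.lt_of_succ_lt h⟩, π ⟨k + 1, h⟩) ∉ E

namespace PCC

variable {V : Type*} [Fintype V] [DecidableEq V] {E : Finset (V × V)} (S : PCC E)

lemma ext' {S₁ S₂ : PCC E} (h : S₁.next = S₂.next) : S₁ = S₂ := by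
  cases S₁; cases S₂; simp_all

lemma iterNext_zero (v : V) : iterNext S 0 v = some v := rfl

lemma iterNext_succ (n : ℕ) (v : V) :
    iterNext S (n + 1) v = (iterNext S n v).bind S.next := rfl

lemma iterNext_one (v : V) : iterNext S 1 v = S.next v := by
  simp [iterNext]

lemma iterNext_add (m n : ℕ) (v : V) :
    iterNext S (m + n) v = (iterNext S m v).bind (iterNext S n) := by
  induction n with
  | zero => simp [iterNext]
  | succ n ih =>
      show iterNext S ((m + n) + 1) v = _
      rw [iterNext_succ, ih]
      cases h : iterNext S m v <;> simp [iterNext_succ]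

lemma iterNext_inj : ∀ (n : ℕ) (u u' v : V),
    iterNext S n u = some v → iterNext S n u' = some v → u = u'
  | 0, u, u', v, h, h' => by
      simp [iterNext] at h h'; rw [h, h']
  | n + 1, u, u', v, h, h' => by
      rw [iterNext_succ] at h h'
      obtain ⟨w, hw, hwv⟩ := Option.bind_eq_some_iff.mp h
      obtain ⟨w', hw', hwv'⟩ := Option.bind_eq_some_iff.mp h'
      obtain rfl : w = w' := S.inj w w' v hwv hwv'
      exact iterNext_inj n u u' w hw hw'

lemma chain_iterNext {n m : ℕ} {a b c : V} (h1 : iterNext S n a = some b)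
    (h2 : iterNext S m b = some c) : iterNext S (n + m) a = some c := by
  rw [iterNext_add, h1, Option.bind_some]; exact h2

lemma iterNext_cancel {n n' : ℕ} {a b c : V} (hn : n ≤ n')
    (h1 : iterNext S n a = some c) (h2 : iterNext S n' b = some c) :
    iterNext S (n' - n) b = some a := by
  have h3 : iterNext S ((n' - n) + n) b = some c := by rwa [Nat.sub_add_cancel hn]
  rw [iterNext_add] at h3
  obtain ⟨z, hz, hzc⟩ := Option.bind_eq_some_iff.mp h3
  rw [show z = a from iterNext_inj S n z a c hzc h1] at hz
  exact hz

lemma connRel_refl (v : V) : connRel S v v := EqvGen.refl v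

lemma connRel_symm {u v : V} (h : connRel S u v) : connRel S v u := EqvGen.symm _ _ h

lemma connRel_trans {u v w : V} (h : connRel S u v) (h' : connRel S v w) : connRel S u w :=
  EqvGen.trans _ _ _ h h'

lemma connRel_of_iterNext {n : ℕ} {u v : V} (h : iterNext S n u = some v) : connRel S u v := by
  induction n generalizing v with
  | zero =>
      obtain rfl : u = v := by simpa [iterNext] using h
      exact connRel_refl S u
  | succ n ih =>
      rw [iterNext_succ] at h
      obtain ⟨w, hw, hwv⟩ := Option.bind_eq_some_iff.mp h
      exact connRel_trans S (ih hw) (EqvGen.rel _ _ hwv)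

lemma connRel_iff {u v : V} :
    connRel S u v ↔ ∃ n : ℕ, iterNext S n u = some v ∨ iterNext S n v = some u := by
  constructor
  · intro h
    induction h with
    | rel a b hab => exact ⟨1, Or.inl (by rw [iterNext_one]; exact hab)⟩
    | refl a => exact ⟨0, Or.inl rfl⟩
    | symm a b _ ih => obtain ⟨n, hn⟩ := ih; exact ⟨n, hn.symm⟩
    | trans a b c _ _ ih₁ ih₂ =>
        obtain ⟨n, hn | hn⟩ := ih₁ <;> obtain ⟨m, hm | hm⟩ := ih₂
        · exact ⟨n + m, Or.inl (chain_iterNext S hn hm)⟩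
        · rcases le_total n m with h' | h'
          · exact ⟨m - n, Or.inr (iterNext_cancel S h' hn hm)⟩
          · exact ⟨n - m, Or.inl (iterNext_cancel S h' hm hn)⟩
        · rcases le_total n m with h' | h'
          · have h3 : iterNext S (n + (m - n)) b = some c := by
              rwa [Nat.add_sub_cancel' h']
            rw [iterNext_add, hn, Option.bind_some] at h3
            exact ⟨m - n, Or.inl h3⟩
          · have h3 : iterNext S (m + (n - m)) b = some a := by
              rwa [Nat.add_sub_cancel' h']
            rw [iterNext_add, hm, Option.bind_some] at h3
            exact ⟨n - m, Or.inr h3⟩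
        · exact ⟨m + n, Or.inr (chain_iterNext S hm hn)⟩
  · rintro ⟨n, h | h⟩
    · exact connRel_of_iterNext S h
    · exact connRel_symm S (connRel_of_iterNext S h)

/-- The set of strict ancestors of a vertex. -/
def ancestors (v : V) : Finset V :=
  univ.filter fun u => ∃ n, 0 < n ∧ iterNext S n u = some v

lemma not_mem_ancestors_self (hnc : ∀ x, ¬ IsCyclicVert S x) (v : V) :
    v ∉ ancestors S v := by
  simp only [ancestors, mem_filter, mem_univ, true_and]
  rintro ⟨n, hn, h⟩
  exact hnc v ⟨n, hn, h⟩

lemma ancestors_next {u v : V} (h : S.next u = some v) :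
    ancestors S v = insert u (ancestors S u) := by
  ext w
  simp only [ancestors, mem_insert, mem_filter, mem_univ, true_and]
  constructor
  · rintro ⟨n, hn, hw⟩
    obtain ⟨n, rfl⟩ : ∃ m, n = m + 1 := ⟨n - 1, (Nat.succ_pred_eq_of_pos hn).symm⟩
    rw [iterNext_succ] at hw
    obtain ⟨z, hz, hzv⟩ := Option.bind_eq_some_iff.mp hw
    obtain rfl : z = u := S.inj z u v hzv h
    rcases Nat.eq_zero_or_pos n with rfl | hn'
    · left; simpa [iterNext] using hz
    · right; exact ⟨n, hn', hz⟩
  · rintro (rfl | ⟨n, hn, hw⟩)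
    · exact ⟨1, one_pos, by rw [iterNext_one]; exact h⟩
    · exact ⟨n + 1, Nat.succ_pos n, by rw [iterNext_succ, hw, Option.bind_some]; exact h⟩

/-- The height of a vertex: the number of its strict ancestors. -/
def ht (v : V) : ℕ := (ancestors S v).card

lemma ht_next (hnc : ∀ x, ¬ IsCyclicVert S x) {u v : V} (h : S.next u = some v) :
    ht S v = ht S u + 1 := by
  rw [ht, ancestors_next S h, card_insert_of_notMem (not_mem_ancestors_self S hnc u), ht]

lemma ht_iterNext (hnc : ∀ x, ¬ IsCyclicVert S x) {n : ℕ} {u v : V}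
    (h : iterNext S n u = some v) : ht S v = ht S u + n := by
  induction n generalizing v with
  | zero =>
      obtain rfl : u = v := by simpa [iterNext] using h
      simp
  | succ n ih =>
      rw [iterNext_succ] at h
      obtain ⟨w, hw, hwv⟩ := Option.bind_eq_some_iff.mp h
      rw [ht_next S hnc hwv, ih hw]; ring

lemma eq_of_connRel_ht (hnc : ∀ x, ¬ IsCyclicVert S x) {u v : V} (h : connRel S u v)
    (hh : ht S u = ht S v) : u = v := by
  obtain ⟨n, hn | hn⟩ := (connRel_iff S).mp h
  · have := ht_iterNext S hnc hn
    obtain rfl : n = 0 := by omega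
    simpa [iterNext] using hn
  · have := ht_iterNext S hnc hn
    obtain rfl : n = 0 := by omega
    exact (by simpa [iterNext] using hn : v = u).symm

lemma next_eq_of_connRel_ht (hnc : ∀ x, ¬ IsCyclicVert S x) {u v : V} (h : connRel S u v)
    (hh : ht S v = ht S u + 1) : S.next u = some v := by
  obtain ⟨n, hn | hn⟩ := (connRel_iff S).mp h
  · have := ht_iterNext S hnc hn
    obtain rfl : n = 1 := by omega
    rwa [iterNext_one] at hn
  · have := ht_iterNext S hnc hn
    omega

lemma mem_blockOf {u v : V} : u ∈ blockOf S v ↔ connRel S v u := by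
  simp [blockOf]

lemma mem_blockOf_self (v : V) : v ∈ blockOf S v := (mem_blockOf S).mpr (connRel_refl S v)

lemma blockOf_eq_of_connRel {u v : V} (h : connRel S u v) : blockOf S u = blockOf S v := by
  ext w
  simp only [mem_blockOf]
  exact ⟨fun h' => connRel_trans S (connRel_symm S h) h', fun h' => connRel_trans S h h'⟩

lemma blockOf_mem_blocks (v : V) : blockOf S v ∈ blocks S := mem_image_of_mem _ (mem_univ v)

lemma eq_blockOf {b : Finset V} (hb : b ∈ blocks S) {v : V} (hv : v ∈ b) : b = blockOf S v := by
  obtain ⟨u, -, rfl⟩ := mem_image.mp hb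
  exact blockOf_eq_of_connRel S ((mem_blockOf S).mp hv)

lemma ht_lt_card_blockOf (hnc : ∀ x, ¬ IsCyclicVert S x) (v : V) :
    ht S v < (blockOf S v).card := by
  have hsub : insert v (ancestors S v) ⊆ blockOf S v := by
    intro w hw
    rcases mem_insert.mp hw with rfl | hw
    · exact mem_blockOf_self S w
    · simp only [ancestors, mem_filter, mem_univ, true_and] at hw
      obtain ⟨n, hn, h⟩ := hw
      exact (mem_blockOf S).mpr (connRel_symm S (connRel_of_iterNext S h))
  calc ht S v < ht S v + 1 := Nat.lt_succ_self _
    _ = (insert v (ancestors S v)).card :=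
        (card_insert_of_notMem (not_mem_ancestors_self S hnc v)).symm
    _ ≤ _ := card_le_card hsub

lemma cycleType_eq_zero_iff : cycleType S = 0 ↔ ∀ v, ¬ IsCyclicVert S v := by
  rw [cycleType, Multiset.map_eq_zero, Finset.val_eq_zero, Finset.filter_eq_empty_iff]
  constructor
  · intro h v hv
    exact h (blockOf_mem_blocks S v) ⟨v, mem_blockOf_self S v, hv⟩
  · rintro h b - ⟨v, -, hv⟩
    exact h v hv

lemma pathType_eq (hnc : ∀ v, ¬ IsCyclicVert S v) :
    pathType S = (blocks S).val.map Finset.card := by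
  rw [pathType, Finset.filter_true_of_mem]
  rintro b - ⟨v, -, hv⟩
  exact hnc v hv

end PCC

section Counting

variable {X Y γ : Type*}

lemma glue_cast (c : X → γ) (b : Y → γ)
    (F : ∀ i : γ, {x // c x = i} ≃ {y // b y = i}) {i j : γ} (h : i = j)
    (x : {x // c x = i}) :
    ((F j) ⟨x.1, by rw [x.2, h]⟩ : Y) = ((F i) x : Y) := by
  subst h; rfl

lemma glue_cast_symm (c : X → γ) (b : Y → γ)
    (F : ∀ i : γ, {x // c x = i} ≃ {y // b y = i}) {i j : γ} (h : i = j)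
    (y : {y // b y = i}) :
    ((F j).symm ⟨y.1, by rw [y.2, h]⟩ : X) = ((F i).symm y : X) := by
  subst h; rfl

/-- Gluing fiberwise equivalences into value-preserving equivalences. -/
def glueEquiv (c : X → γ) (b : Y → γ) :
    {φ : X ≃ Y // ∀ x, b (φ x) = c x} ≃ ∀ i : γ, ({x // c x = i} ≃ {y // b y = i}) where
  toFun φ i := Equiv.subtypeEquiv φ.1 (fun x => by rw [φ.2 x])
  invFun F :=
    ⟨{ toFun := fun x => (F (c x) ⟨x, rfl⟩ : Y)
       invFun := fun y => ((F (b y)).symm ⟨y, rfl⟩ : X)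
       left_inv := fun x => by
         have h : b ((F (c x) ⟨x, rfl⟩ : Y)) = c x := (F (c x) ⟨x, rfl⟩).2
         have key := glue_cast_symm c b F h.symm ⟨(F (c x) ⟨x, rfl⟩ : Y), h⟩
         refine key.trans ?_
         rw [show (⟨(F (c x) ⟨x, rfl⟩ : Y), h⟩ : {y // b y = c x}) = F (c x) ⟨x, rfl⟩ from rfl,
           Equiv.symm_apply_apply]
       right_inv := fun y => by
         have h : c (((F (b y)).symm ⟨y, rfl⟩ : X)) = b y := ((F (b y)).symm ⟨y, rfl⟩).2
         have key := glue_cast c b F h.symm ⟨((F (b y)).symm ⟨y, rfl⟩ : X), h⟩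
         refine key.trans ?_
         rw [show (⟨((F (b y)).symm ⟨y, rfl⟩ : X), h⟩ : {x // c x = b y}) =
             (F (b y)).symm ⟨y, rfl⟩ from rfl, Equiv.apply_symm_apply] },
     fun x => (F (c x) ⟨x, rfl⟩).2⟩
  left_inv φ := by
    apply Subtype.ext
    apply Equiv.ext
    intro x
    rfl
  right_inv F := by
    funext i
    apply Equiv.ext
    intro x
    apply Subtype.ext
    exact (glue_cast c b F x.2 ⟨x.1, rfl⟩).symm

lemma natCard_equiv_fintype (A B : Type*) [Fintype A] [Fintype B] :
    Nat.card (A ≃ B) =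
      if Fintype.card A = Fintype.card B then (Fintype.card A).factorial else 0 := by
  split_ifs with h
  · obtain ⟨e⟩ := Fintype.card_eq.mp h
    rw [Nat.card_eq_fintype_card, Fintype.card_equiv e]
  · have : IsEmpty (A ≃ B) := ⟨fun e => h (Fintype.card_congr e)⟩
    exact Nat.card_of_isEmpty

lemma card_fiber {X : Type*} [Fintype X] (c : X → ℕ) (j : ℕ) :
    Fintype.card {x // c x = j} = Multiset.count j ((univ : Finset X).val.map c) := by
  classical
  rw [Fintype.card_subtype, Multiset.count_map]
  rw [Finset.card, Finset.filter_val]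
  congr 1
  apply Multiset.filter_congr
  intro x _
  exact eq_comm

lemma card_valpres {X Y : Type*} [Fintype X] [Fintype Y] (c : X → ℕ) (b : Y → ℕ) :
    Nat.card {φ : X ≃ Y // ∀ x, b (φ x) = c x} =
      if ((univ : Finset X).val.map c = (univ : Finset Y).val.map b)
      then rfact ((univ : Finset X).val.map c) else 0 := by
  set T : Finset ℕ := (univ.image c) ∪ (univ.image b) with hT
  have hcT : ∀ x, c x ∈ T := fun x => mem_union_left _ (mem_image_of_mem c (mem_univ x))
  have hbT : ∀ y, b y ∈ T := fun y => mem_union_right _ (mem_image_of_mem b (mem_univ y))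
  set c' : X → ↥T := fun x => ⟨c x, hcT x⟩ with hc'
  set b' : Y → ↥T := fun y => ⟨b y, hbT y⟩ with hb'
  have step1 : {φ : X ≃ Y // ∀ x, b (φ x) = c x} ≃ {φ : X ≃ Y // ∀ x, b' (φ x) = c' x} :=
    Equiv.subtypeEquivRight (fun φ => forall_congr' fun x =>
      ⟨fun h => Subtype.ext h, fun h => congrArg Subtype.val h⟩)
  have hcard : Nat.card {φ : X ≃ Y // ∀ x, b (φ x) = c x} =
      ∏ i : ↥T, Nat.card ({x // c' x = i} ≃ {y // b' y = i}) := by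
    rw [Nat.card_congr (step1.trans (glueEquiv c' b')), Nat.card_pi]
  have hfac : ∀ i : ↥T, Nat.card ({x // c' x = i} ≃ {y // b' y = i}) =
      if Multiset.count i.1 ((univ : Finset X).val.map c) =
          Multiset.count i.1 ((univ : Finset Y).val.map b)
      then (Multiset.count i.1 ((univ : Finset X).val.map c)).factorial else 0 := by
    intro i
    have eA : {x // c' x = i} ≃ {x // c x = i.1} :=
      Equiv.subtypeEquivRight (fun x => Subtype.ext_iff)
    have eB : {y // b' y = i} ≃ {y // b y = i.1} :=
      Equiv.subtypeEquivRight (fun y => Subtype.ext_iff)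
    rw [Nat.card_congr (Equiv.equivCongr eA eB), natCard_equiv_fintype,
      card_fiber c i.1, card_fiber b i.1]
  rw [hcard, Finset.prod_congr rfl (fun i _ => hfac i)]
  by_cases h : ((univ : Finset X).val.map c = (univ : Finset Y).val.map b)
  · rw [if_pos h]
    have hcount : ∀ j, Multiset.count j ((univ : Finset X).val.map c) =
        Multiset.count j ((univ : Finset Y).val.map b) := fun j => by rw [h]
    have hTc : T = ((univ : Finset X).val.map c).toFinset := by
      ext j
      simp only [hT, Finset.mem_union, Finset.mem_image, Multiset.mem_toFinset,
        Multiset.mem_map, Finset.mem_univ, true_and, Finset.mem_val]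
      constructor
      · rintro (h' | ⟨y, rfl⟩)
        · exact h'
        · have hmem : b y ∈ Multiset.map c (univ : Finset X).val := by
            rw [h]
            exact Multiset.mem_map_of_mem b (Finset.mem_val.mpr (Finset.mem_univ y))
          obtain ⟨x, -, hx⟩ := Multiset.mem_map.mp hmem
          exact ⟨x, hx⟩
      · exact Or.inl
    calc (∏ i : ↥T, if Multiset.count i.1 ((univ : Finset X).val.map c) =
            Multiset.count i.1 ((univ : Finset Y).val.map b)
          then (Multiset.count i.1 ((univ : Finset X).val.map c)).factorial else 0)
        = ∏ i : ↥T, (Multiset.count i.1 ((univ : Finset X).val.map c)).factorial := by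
          apply Finset.prod_congr rfl
          intro i _
          rw [if_pos (hcount i.1)]
      _ = ∏ j ∈ T, (Multiset.count j ((univ : Finset X).val.map c)).factorial :=
          Finset.prod_coe_sort T
            (fun j => (Multiset.count j ((univ : Finset X).val.map c)).factorial)
      _ = rfact ((univ : Finset X).val.map c) := by rw [rfact, hTc]
  · rw [if_neg h]
    obtain ⟨j, hj⟩ : ∃ j, Multiset.count j ((univ : Finset X).val.map c) ≠
        Multiset.count j ((univ : Finset Y).val.map b) := by
      by_contra hc
      push_neg at hc
      exact h (Multiset.ext.mpr hc)
    have hjT : j ∈ T := by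
      by_contra hjT
      rw [hT, Finset.mem_union, not_or] at hjT
      have h1 : Multiset.count j ((univ : Finset X).val.map c) = 0 := by
        rw [Multiset.count_eq_zero]
        intro hmem
        obtain ⟨x, -, rfl⟩ := Multiset.mem_map.mp hmem
        exact hjT.1 (mem_image_of_mem c (mem_univ x))
      have h2 : Multiset.count j ((univ : Finset Y).val.map b) = 0 := by
        rw [Multiset.count_eq_zero]
        intro hmem
        obtain ⟨y, -, rfl⟩ := Multiset.mem_map.mp hmem
        exact hjT.2 (mem_image_of_mem b (mem_univ y))
      exact hj (h1.trans h2.symm)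
    apply Finset.prod_eq_zero (mem_univ (⟨j, hjT⟩ : ↥T))
    rw [if_neg hj]

lemma card_filter_equiv {α β : Type*} [Fintype α] [Fintype β] (σ : α ≃ β) (p : β → Prop)
    [DecidablePred p] [DecidablePred fun a => p (σ a)] :
    ((univ : Finset α).filter fun a => p (σ a)).card = ((univ : Finset β).filter p).card := by
  apply Finset.card_bij (fun a _ => σ a)
  · intro a ha
    simp only [mem_filter, mem_univ, true_and] at *
    exact ha
  · intro a _ a' _ h
    exact σ.injective h
  · intro bb hb
    simp only [mem_filter, mem_univ, true_and] at *
    exact ⟨σ.symm bb, by simpa using hb, by simp⟩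

end Counting

section Bridge

variable {V : Type*} [Fintype V] [DecidableEq V] {E : Finset (V × V)}

/-- The conditions satisfied by a "proper coloring" `g` attached to a path cover. -/
def GCond (S : PCC E) (w : ℕ → ℕ) (g : V → ℕ) : Prop :=
  (∀ v, ¬ S.IsCyclicVert v) ∧
  (∀ u v, S.next u = some v → g u = g v) ∧
  (∀ u v, g u = g v → S.connRel u v) ∧
  (∀ m, ((univ : Finset V).filter fun v => g v = m).card = w m)

lemma GCond.const_on_connRel {S : PCC E} {w : ℕ → ℕ} {g : V → ℕ} (hg : GCond S w g)
    {u v : V} (h : S.connRel u v) : g u = g v := by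
  have h' : EqvGen (fun a b => S.next a = some b) u v := h
  induction h' with
  | rel a b hab => exact hg.2.1 a b hab
  | refl a => rfl
  | symm a b hab ih => exact (ih hab).symm
  | trans a b c hab hbc ih₁ ih₂ => exact (ih₁ hab).trans (ih₂ hbc)

lemma GCond.blockOf_eq_fiber {S : PCC E} {w : ℕ → ℕ} {g : V → ℕ} (hg : GCond S w g) (v : V) :
    S.blockOf v = (univ : Finset V).filter fun u => g u = g v := by
  ext u
  simp only [PCC.mem_blockOf, mem_filter, mem_univ, true_and]
  exact ⟨fun h => (hg.const_on_connRel (S.connRel_symm h)),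
    fun h => S.connRel_symm (hg.2.2.1 u v h)⟩

lemma blocks_nonempty (S : PCC E) {b : Finset V} (hb : b ∈ S.blocks) : b.Nonempty := by
  obtain ⟨v, -, rfl⟩ := mem_image.mp hb
  exact ⟨v, S.mem_blockOf_self v⟩

/-- A chosen element of a block. -/
def pick (S : PCC E) (bl : ↥(S.blocks)) : V := (blocks_nonempty S bl.2).choose

lemma pick_mem (S : PCC E) (bl : ↥(S.blocks)) : pick S bl ∈ bl.1 :=
  (blocks_nonempty S bl.2).choose_spec

lemma blockOf_pick (S : PCC E) (bl : ↥(S.blocks)) : S.blockOf (pick S bl) = bl.1 :=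
  (S.eq_blockOf bl.2 (pick_mem S bl)).symm

/-- Colorings correspond to size-preserving bijections from blocks to active values. -/
def gcondEquiv (S : PCC E) (w : ℕ → ℕ) (Wf : Finset ℕ) (hWf : ∀ m, m ∈ Wf ↔ w m ≠ 0)
    (hnc : ∀ v, ¬ S.IsCyclicVert v) :
    {g : V → ℕ // GCond S w g} ≃
      {φ : ↥(S.blocks) ≃ ↥Wf // ∀ bl : ↥(S.blocks), w (φ bl).1 = (bl.1).card} where
  toFun g := by
    refine ⟨Equiv.ofBijective (fun bl => (⟨g.1 (pick S bl), ?_⟩ : ↥Wf)) ⟨?_, ?_⟩, ?_⟩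
    · rw [hWf, ← g.2.2.2.2 (g.1 (pick S bl))]
      exact Finset.card_ne_zero_of_mem (mem_filter.mpr ⟨mem_univ _, rfl⟩)
    · intro bl bl' h
      simp only [Subtype.mk.injEq] at h
      have hconn := g.2.2.2.1 _ _ h
      apply Subtype.ext
      rw [← blockOf_pick S bl, ← blockOf_pick S bl']
      exact S.blockOf_eq_of_connRel hconn
    · rintro ⟨m, hm⟩
      have hpos : 0 < ((univ : Finset V).filter fun v => g.1 v = m).card := by
        rw [g.2.2.2.2 m]
        exact Nat.pos_of_ne_zero ((hWf m).mp hm)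
      obtain ⟨v, hv⟩ := Finset.card_pos.mp hpos
      have hvm : g.1 v = m := (mem_filter.mp hv).2
      refine ⟨⟨S.blockOf v, S.blockOf_mem_blocks v⟩, ?_⟩
      apply Subtype.ext
      have : S.connRel v (pick S ⟨S.blockOf v, S.blockOf_mem_blocks v⟩) :=
        (S.mem_blockOf).mp (pick_mem S ⟨S.blockOf v, S.blockOf_mem_blocks v⟩)
      calc g.1 (pick S ⟨S.blockOf v, S.blockOf_mem_blocks v⟩)
          = g.1 v := (g.2.const_on_connRel this).symm
        _ = m := hvm
    · intro bl
      show w (g.1 (pick S bl)) = (bl.1).card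
      rw [← g.2.2.2.2 (g.1 (pick S bl)), ← g.2.blockOf_eq_fiber (pick S bl), blockOf_pick]
  invFun φ := by
    refine ⟨fun v => (φ.1 ⟨S.blockOf v, S.blockOf_mem_blocks v⟩).1, hnc, ?_, ?_, ?_⟩
    · intro u v h
      have hb : S.blockOf u = S.blockOf v := S.blockOf_eq_of_connRel (EqvGen.rel _ _ h)
      exact congrArg (fun bl => (φ.1 bl).1) (Subtype.ext hb)
    · intro u v h
      have h' : φ.1 ⟨S.blockOf u, S.blockOf_mem_blocks u⟩ =
          φ.1 ⟨S.blockOf v, S.blockOf_mem_blocks v⟩ := Subtype.ext h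
      have := φ.1.injective h'
      have hbv : S.blockOf u = S.blockOf v := congrArg Subtype.val this
      exact (S.mem_blockOf).mp (hbv ▸ S.mem_blockOf_self v)
    · intro m
      by_cases hm : m ∈ Wf
      · set bl : ↥(S.blocks) := φ.1.symm ⟨m, hm⟩ with hbl
        have hfil : ((univ : Finset V).filter
            fun v => (φ.1 ⟨S.blockOf v, S.blockOf_mem_blocks v⟩).1 = m) = bl.1 := by
          ext v
          simp only [mem_filter, mem_univ, true_and]
          constructor
          · intro hv
            have : φ.1 ⟨S.blockOf v, S.blockOf_mem_blocks v⟩ = ⟨m, hm⟩ := Subtype.ext hv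
            have : (⟨S.blockOf v, S.blockOf_mem_blocks v⟩ : ↥(S.blocks)) = bl := by
              rw [hbl, Equiv.eq_symm_apply, this]
            have hb : bl.1 = S.blockOf v := (congrArg Subtype.val this).symm
            rw [hb]
            exact S.mem_blockOf_self v
          · intro hv
            have hb : bl.1 = S.blockOf v := S.eq_blockOf bl.2 hv
            have : (⟨S.blockOf v, S.blockOf_mem_blocks v⟩ : ↥(S.blocks)) = bl :=
              Subtype.ext hb.symm
            rw [this, hbl, Equiv.apply_symm_apply]
        rw [hfil]
        have := φ.2 bl
        rw [hbl] at this ⊢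
        rw [Equiv.apply_symm_apply] at this
        exact this.symm
      · have hw0 : w m = 0 := by
          by_contra h0
          exact hm ((hWf m).mpr h0)
        rw [hw0, Finset.card_eq_zero, Finset.filter_eq_empty_iff]
        intro v _
        intro hv
        exact hm (hv ▸ (φ.1 ⟨S.blockOf v, S.blockOf_mem_blocks v⟩).2)
  left_inv g := by
    apply Subtype.ext
    funext v
    show g.1 (pick S ⟨S.blockOf v, S.blockOf_mem_blocks v⟩) = g.1 v
    have : S.connRel v (pick S ⟨S.blockOf v, S.blockOf_mem_blocks v⟩) :=
      (S.mem_blockOf).mp (pick_mem S ⟨S.blockOf v, S.blockOf_mem_blocks v⟩)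
    exact (g.2.const_on_connRel this).symm
  right_inv φ := by
    apply Subtype.ext
    apply Equiv.ext
    intro bl
    apply Subtype.ext
    show (φ.1 ⟨S.blockOf (pick S bl), S.blockOf_mem_blocks _⟩).1 = (φ.1 bl).1
    exact congrArg (fun b => (φ.1 b).1) (Subtype.ext (blockOf_pick S bl))

lemma univ_val_map_subtype {α β : Type*} (s : Finset α) (f : α → β) :
    (univ : Finset ↥s).val.map (fun x => f x.1) = s.val.map f := by
  rw [Finset.univ_eq_attach, Finset.attach_val]
  exact Multiset.attach_map_val' s.val f

lemma card_GCond (S : PCC E) (w : ℕ → ℕ) (Wf : Finset ℕ) (hWf : ∀ m, m ∈ Wf ↔ w m ≠ 0) :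
    (Nat.card {g : V → ℕ // GCond S w g} : ℚ) =
      if S.cycleType = 0 ∧ Wf.val.map w = S.pathType then (rfact S.pathType : ℚ) else 0 := by
  by_cases hnc : ∀ v, ¬ S.IsCyclicVert v
  · have h0 : S.cycleType = 0 := (S.cycleType_eq_zero_iff).mpr hnc
    rw [Nat.card_congr (gcondEquiv S w Wf hWf hnc)]
    have hval := card_valpres (fun bl : ↥(S.blocks) => (bl.1).card) (fun m : ↥Wf => w m.1)
    rw [hval, univ_val_map_subtype S.blocks Finset.card, univ_val_map_subtype Wf w,
      ← S.pathType_eq hnc]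
    by_cases heq : Wf.val.map w = S.pathType
    · rw [if_pos heq.symm, if_pos ⟨h0, heq⟩]
    · rw [if_neg (fun hc => heq hc.symm), if_neg (fun hc => heq hc.2)]
      simp
  · have : IsEmpty {g : V → ℕ // GCond S w g} := ⟨fun g => hnc g.2.1⟩
    rw [Nat.card_of_isEmpty, if_neg]
    · simp
    · rintro ⟨h0, -⟩
      exact hnc ((S.cycleType_eq_zero_iff).mp h0)

end Bridge

section Coeff

lemma isLeft_iff_exists (s : ℕ ⊕ ℕ) : (∃ m, Sum.inl m = s) ↔ s.isLeft = true := by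
  cases s <;> simp

lemma ppP_coeff_zero {μ : Multiset ℕ} (hμ : μ ≠ 0) {c : (ℕ ⊕ ℕ) →₀ ℕ}
    (hc : ∀ s ∈ c.support, s.isLeft = true) : ppP yVar μ c = 0 := by
  obtain ⟨n, hn⟩ := Multiset.exists_mem_of_ne_zero hμ
  obtain ⟨μ', rfl⟩ := Multiset.exists_cons_of_mem hn
  have hrw : ppP yVar (n ::ₘ μ') c = (MvPowerSeries.coeff c)
      (msfP yVar ({n} : Multiset ℕ) *
        (Multiset.map (fun k => msfP yVar ({k} : Multiset ℕ)) μ').prod) := by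
    rw [ppP, Multiset.map_cons, Multiset.prod_cons]
    rfl
  rw [hrw, MvPowerSeries.coeff_mul]
  apply Finset.sum_eq_zero
  rintro ⟨c1, c2⟩ hp
  have hadd : c1 + c2 = c := Finset.HasAntidiagonal.mem_antidiagonal.mp hp
  have h1 : msfP yVar ({n} : Multiset ℕ) c1 = 0 := by
    rw [msfP, if_neg]
    rintro ⟨hy, hshape⟩
    have hne : c1.support ≠ ∅ := by
      intro h0
      rw [expShape, h0] at hshape
      simp at hshape
    obtain ⟨s, hs⟩ := Finset.nonempty_of_ne_empty hne
    have hcs : s ∈ c.support := by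
      rw [Finsupp.mem_support_iff] at hs ⊢
      rw [← hadd, Finsupp.add_apply]
      intro h0
      exact hs (by omega)
    have hl : s.isLeft = true := hc s hcs
    have hr : s.isRight = true := hy s hs
    cases s with
    | inl a => simp at hr
    | inr a => simp at hl
  rw [show (MvPowerSeries.coeff c1)
      (msfP yVar ({n} : Multiset ℕ)) = msfP yVar ({n} : Multiset ℕ) c1 from rfl, h1, zero_mul]

lemma ppP_zero : ppP yVar (0 : Multiset ℕ) = 1 := by
  simp [ppP]

lemma setY0_Xi_coeff {V : Type*} [Fintype V] [DecidableEq V] (E : Finset (V × V))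
    (c : (ℕ ⊕ ℕ) →₀ ℕ) (hc : ∀ s ∈ c.support, s.isLeft = true) :
    setY0 (Xi E) c = ∑ S : PCC E,
      (if S.cycleType = 0 ∧ expShape c = S.pathType then (rfact S.pathType : ℚ) else 0) := by
  have h0 : setY0 (Xi E) c = (MvPowerSeries.coeff c) (Xi E) := by
    rw [setY0, if_pos hc]
    rfl
  rw [h0, Xi, map_sum]
  refine Finset.sum_congr rfl fun S _ => ?_
  by_cases h0 : S.cycleType = 0
  · rw [h0, ppP_zero, mul_one, maugP, map_smul, smul_eq_mul]
    have hx : ∀ s ∈ c.support, xVar s := hc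
    have hco : (MvPowerSeries.coeff c) (msfP xVar S.pathType) =
        if (∀ s ∈ c.support, xVar s) ∧ expShape c = S.pathType then (1 : ℚ) else 0 := rfl
    rw [hco]
    by_cases hP : expShape c = S.pathType
    · rw [if_pos ⟨hx, hP⟩, if_pos ⟨rfl, hP⟩, mul_one]
    · rw [if_neg (fun hh => hP hh.2), if_neg (fun hh => hP hh.2), mul_zero]
  · rw [if_neg (fun hh => h0 hh.1), MvPowerSeries.coeff_mul]
    apply Finset.sum_eq_zero
    rintro ⟨c1, c2⟩ hp
    have hadd : c1 + c2 = c := Finset.HasAntidiagonal.mem_antidiagonal.mp hp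
    have h2 : (MvPowerSeries.coeff c2) (ppP yVar S.cycleType) = 0 := by
      show ppP yVar S.cycleType c2 = 0
      apply ppP_coeff_zero h0
      intro s hs
      apply hc
      rw [Finsupp.mem_support_iff] at hs ⊢
      rw [← hadd, Finsupp.add_apply]
      intro hz
      exact hs (by omega)
    rw [h2, mul_zero]

lemma support_decomp (c : (ℕ ⊕ ℕ) →₀ ℕ) (hc : ∀ s ∈ c.support, s.isLeft = true) :
    c.support = (c.support.image (Sum.elim id id)).image Sum.inl := by
  ext s
  constructor
  · intro hs
    obtain ⟨m, rfl⟩ : ∃ m, s = Sum.inl m := by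
      have := hc s hs
      cases s with
      | inl a => exact ⟨a, rfl⟩
      | inr a => simp at this
    exact mem_image_of_mem _ (mem_image_of_mem _ hs)
  · intro hs
    obtain ⟨m, hm, rfl⟩ := mem_image.mp hs
    obtain ⟨t, ht, hmt⟩ := mem_image.mp hm
    obtain ⟨a, rfl⟩ : ∃ a, t = Sum.inl a := by
      have := hc t ht
      cases t with
      | inl a => exact ⟨a, rfl⟩
      | inr a => simp at this
    simp only [Sum.elim_inl, id_eq] at hmt
    rwa [← hmt]

lemma expShape_eq_Wf (c : (ℕ ⊕ ℕ) →₀ ℕ) (hc : ∀ s ∈ c.support, s.isLeft = true) :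
    expShape c = (c.support.image (Sum.elim id id)).val.map (fun m => c (Sum.inl m)) := by
  set Wf := c.support.image (Sum.elim id id) with hWfdef
  rw [expShape, support_decomp c hc]
  rw [Finset.image_val, Multiset.dedup_eq_self.mpr
    (Multiset.Nodup.map Sum.inl_injective Wf.nodup), Multiset.map_map]
  rfl

lemma mem_Wf_iff (c : (ℕ ⊕ ℕ) →₀ ℕ) (hc : ∀ s ∈ c.support, s.isLeft = true) (m : ℕ) :
    m ∈ c.support.image (Sum.elim id id) ↔ c (Sum.inl m) ≠ 0 := by
  constructor
  · intro hm
    obtain ⟨t, ht, hmt⟩ := mem_image.mp hm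
    obtain ⟨a, rfl⟩ : ∃ a, t = Sum.inl a := by
      have := hc t ht
      cases t with
      | inl a => exact ⟨a, rfl⟩
      | inr a => simp at this
    simp only [Sum.elim_inl, id_eq] at hmt
    rw [← hmt]
    exact Finsupp.mem_support_iff.mp ht
  · intro hm
    have : Sum.inl m ∈ c.support := Finsupp.mem_support_iff.mpr hm
    simpa using mem_image_of_mem (Sum.elim id id) this

lemma natCard_sigma' {ι : Type*} [Fintype ι] (A : ι → Type*) [∀ i, Finite (A i)] :
    (Nat.card (Σ i, A i)) = ∑ i, Nat.card (A i) := by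
  letI := fun i => Fintype.ofFinite (A i)
  rw [Nat.card_eq_fintype_card, Fintype.card_sigma]
  exact Finset.sum_congr rfl fun i _ => (Nat.card_eq_fintype_card).symm

lemma finite_GCond {V : Type*} [Fintype V] [DecidableEq V] {E : Finset (V × V)}
    (S : PCC E) (w : ℕ → ℕ) (Wf : Finset ℕ) (hWf : ∀ m, m ∈ Wf ↔ w m ≠ 0) :
    Finite {g : V → ℕ // GCond S w g} := by
  apply Finite.of_injective (fun g : {g : V → ℕ // GCond S w g} =>
    (fun v => (⟨g.1 v, (hWf _).mpr (by
      rw [← g.2.2.2.2 (g.1 v)]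
      exact Finset.card_ne_zero_of_mem (mem_filter.mpr ⟨mem_univ _, rfl⟩))⟩ : ↥Wf) : V → ↥Wf))
  intro g g' h
  apply Subtype.ext
  funext v
  exact congrArg Subtype.val (congrFun h v)

/-- The conditions from the fundamental quasisymmetric function. -/
def QCond {d : ℕ} (T : Finset ℕ) (w : ℕ → ℕ) (f : Fin d → ℕ) : Prop :=
  (∀ k l : Fin d, k ≤ l → f k ≤ f l) ∧
  (∀ (k : ℕ) (h : k + 1 < d), k ∈ T → f ⟨k, Nat.lt_of_succ_lt h⟩ < f ⟨k + 1, h⟩) ∧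
  ∀ m : ℕ, ((univ : Finset (Fin d)).filter fun k => f k = m).card = w m

lemma finite_QCond {d : ℕ} (T : Finset ℕ) (w : ℕ → ℕ) (Wf : Finset ℕ)
    (hWf : ∀ m, m ∈ Wf ↔ w m ≠ 0) : Finite {f : Fin d → ℕ // QCond T w f} := by
  apply Finite.of_injective (fun f : {f : Fin d → ℕ // QCond T w f} =>
    (fun k => (⟨f.1 k, (hWf _).mpr (by
      rw [← f.2.2.2 (f.1 k)]
      exact Finset.card_ne_zero_of_mem (mem_filter.mpr ⟨mem_univ _, rfl⟩))⟩ : ↥Wf) : Fin d → ↥Wf))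
  intro f f' h
  apply Subtype.ext
  funext k
  exact congrArg Subtype.val (congrFun h k)

lemma Qfun_coeff {d : ℕ} (T : Finset ℕ) (c : (ℕ ⊕ ℕ) →₀ ℕ)
    (hc : ∀ s ∈ c.support, s.isLeft = true) :
    Qfun (Sum.inl : ℕ → ℕ ⊕ ℕ) T d c =
      (Nat.card {f : Fin d → ℕ // QCond T (fun m => c (Sum.inl m)) f} : ℚ) := by
  rw [Qfun, if_pos]
  · rfl
  · intro s hs
    exact (isLeft_iff_exists s).mpr (hc s hs)

end Coeff

section MainBijection

variable {d : ℕ}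

lemma card_filter_lt_fin (l : Fin d) :
    ((univ : Finset (Fin d)).filter fun x => x < l).card = (l : ℕ) := by
  rw [show ((univ : Finset (Fin d)).filter fun x => x < l) = Finset.Iio l by
    ext x; simp [Finset.mem_Iio], Fin.card_Iio]

lemma card_filter_le_fin (l : Fin d) :
    ((univ : Finset (Fin d)).filter fun x => x ≤ l).card = (l : ℕ) + 1 := by
  rw [show ((univ : Finset (Fin d)).filter fun x => x ≤ l) = Finset.Iic l by
    ext x; simp [Finset.mem_Iic], Fin.card_Iic]

lemma lt_countLT_iff {f : Fin d → ℕ} (hmono : ∀ k l : Fin d, k ≤ l → f k ≤ f l) (k l : Fin d) :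
    f l < f k ↔ (l : ℕ) < ((univ : Finset (Fin d)).filter fun x => f x < f k).card := by
  constructor
  · intro h
    have hsub : ((univ : Finset (Fin d)).filter fun x => x ≤ l) ⊆
        ((univ : Finset (Fin d)).filter fun x => f x < f k) := by
      intro x hx
      rw [mem_filter] at hx ⊢
      exact ⟨mem_univ x, lt_of_le_of_lt (hmono x l hx.2) h⟩
    have hcard := Finset.card_le_card hsub
    rw [card_filter_le_fin] at hcard
    omega
  · intro h
    by_contra hcon
    push_neg at hcon
    have hsub : ((univ : Finset (Fin d)).filter fun x => f x < f k) ⊆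
        ((univ : Finset (Fin d)).filter fun x => x < l) := by
      intro x hx
      rw [mem_filter] at hx ⊢
      refine ⟨mem_univ x, ?_⟩
      by_contra hxl
      push_neg at hxl
      have h1 := hmono l x hxl
      have h2 := hx.2
      omega
    have hcard := Finset.card_le_card hsub
    rw [card_filter_lt_fin] at hcard
    omega

variable {E : Finset (Fin d × Fin d)}

/-- The path cover associated to a permutation and a `P`-partition-like function. -/
def coverOf (E : Finset (Fin d × Fin d)) (w : ℕ → ℕ) (π : Equiv.Perm (Fin d))
    (f : Fin d → ℕ) (hQ : QCond (Tset E π) w f) : PCC E where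
  next u :=
    if h : ∃ hl : ((π.symm u : Fin d) : ℕ) + 1 < d,
        f (π.symm u) = f ⟨((π.symm u : Fin d) : ℕ) + 1, hl⟩
      then some (π ⟨((π.symm u : Fin d) : ℕ) + 1, h.choose⟩) else none
  mem_edges u v hv := by
    by_cases h : ∃ hl : ((π.symm u : Fin d) : ℕ) + 1 < d,
        f (π.symm u) = f ⟨((π.symm u : Fin d) : ℕ) + 1, hl⟩
    · rw [dif_pos h] at hv
      obtain ⟨hl, hf⟩ := h
      have hv' : π ⟨((π.symm u : Fin d) : ℕ) + 1, hl⟩ = v := Option.some_injective _ hv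
      by_contra hE
      have hmem : ((π.symm u : Fin d) : ℕ) ∈ Tset E π := by
        rw [Tset, mem_filter, mem_range]
        refine ⟨by omega, hl, ?_⟩
        rw [Fin.eta, Equiv.apply_symm_apply, hv']
        exact hE
      have hlt := hQ.2.1 ((π.symm u : Fin d) : ℕ) hl hmem
      rw [Fin.eta] at hlt
      rw [hf] at hlt
      exact lt_irrefl _ hlt
    · rw [dif_neg h] at hv
      exact absurd hv (by simp)
  inj u u' v hv hv' := by
    by_cases h : ∃ hl : ((π.symm u : Fin d) : ℕ) + 1 < d,
        f (π.symm u) = f ⟨((π.symm u : Fin d) : ℕ) + 1, hl⟩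
    · by_cases h' : ∃ hl : ((π.symm u' : Fin d) : ℕ) + 1 < d,
          f (π.symm u') = f ⟨((π.symm u' : Fin d) : ℕ) + 1, hl⟩
      · rw [dif_pos h] at hv
        rw [dif_pos h'] at hv'
        have e1 := Option.some_injective _ hv
        have e2 := Option.some_injective _ hv'
        have e3 := π.injective (e1.trans e2.symm)
        have hval : ((π.symm u : Fin d) : ℕ) + 1 = ((π.symm u' : Fin d) : ℕ) + 1 :=
          congrArg Fin.val e3
        have : π.symm u = π.symm u' := Fin.ext (by omega)
        exact π.symm.injective this
      · rw [dif_neg h'] at hv'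
        exact absurd hv' (by simp)
    · rw [dif_neg h] at hv
      exact absurd hv (by simp)

lemma coverOf_next_val {w : ℕ → ℕ} {π : Equiv.Perm (Fin d)} {f : Fin d → ℕ}
    {hQ : QCond (Tset E π) w f} {u v : Fin d}
    (h : (coverOf E w π f hQ).next u = some v) :
    ((π.symm v : Fin d) : ℕ) = ((π.symm u : Fin d) : ℕ) + 1 ∧
      f (π.symm u) = f (π.symm v) := by
  by_cases hcond : ∃ hl : ((π.symm u : Fin d) : ℕ) + 1 < d,
      f (π.symm u) = f ⟨((π.symm u : Fin d) : ℕ) + 1, hl⟩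
  · rw [show (coverOf E w π f hQ).next u = dite _ _ _ from rfl, dif_pos hcond] at h
    obtain ⟨hl, hf⟩ := hcond
    have hv : π ⟨((π.symm u : Fin d) : ℕ) + 1, hl⟩ = v := Option.some_injective _ h
    constructor
    · rw [← hv, Equiv.symm_apply_apply]
    · rw [← hv, Equiv.symm_apply_apply]
      exact hf
  · rw [show (coverOf E w π f hQ).next u = dite _ _ _ from rfl, dif_neg hcond] at h
    exact absurd h (by simp)

lemma coverOf_iter_val {w : ℕ → ℕ} {π : Equiv.Perm (Fin d)} {f : Fin d → ℕ}
    {hQ : QCond (Tset E π) w f} {n : ℕ} {u v : Fin d}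
    (h : PCC.iterNext (coverOf E w π f hQ) n u = some v) :
    ((π.symm v : Fin d) : ℕ) = ((π.symm u : Fin d) : ℕ) + n := by
  induction n generalizing v with
  | zero =>
      obtain rfl : u = v := by simpa [PCC.iterNext] using h
      simp
  | succ n ih =>
      rw [PCC.iterNext_succ] at h
      obtain ⟨z, hz, hzv⟩ := Option.bind_eq_some_iff.mp h
      have h1 := ih hz
      have h2 := (coverOf_next_val hzv).1
      omega

lemma coverOf_noCyc (w : ℕ → ℕ) (π : Equiv.Perm (Fin d)) (f : Fin d → ℕ)
    (hQ : QCond (Tset E π) w f) : ∀ v, ¬ (coverOf E w π f hQ).IsCyclicVert v := by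
  rintro v ⟨n, hn, h⟩
  have := coverOf_iter_val h
  omega

lemma coverOf_next_eq {w : ℕ → ℕ} {π : Equiv.Perm (Fin d)} {f : Fin d → ℕ}
    {hQ : QCond (Tset E π) w f} (k : Fin d)
    (hl : (k : ℕ) + 1 < d) (hf : f k = f ⟨(k : ℕ) + 1, hl⟩) :
    (coverOf E w π f hQ).next (π k) = some (π ⟨(k : ℕ) + 1, hl⟩) := by
  show dite _ _ _ = _
  have hcond : ∃ hl' : ((π.symm (π k) : Fin d) : ℕ) + 1 < d,
      f (π.symm (π k)) = f ⟨((π.symm (π k) : Fin d) : ℕ) + 1, hl'⟩ := by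
    rw [Equiv.symm_apply_apply]
    exact ⟨hl, hf⟩
  rw [dif_pos hcond]
  congr 1
  apply congrArg π
  apply Fin.ext
  show ((π.symm (π k) : Fin d) : ℕ) + 1 = (k : ℕ) + 1
  rw [Equiv.symm_apply_apply]

lemma coverOf_chain {w : ℕ → ℕ} {π : Equiv.Perm (Fin d)} {f : Fin d → ℕ}
    {hQ : QCond (Tset E π) w f} {a b : Fin d}
    (hab : (a : ℕ) ≤ (b : ℕ)) (hf : f a = f b) :
    PCC.iterNext (coverOf E w π f hQ) ((b : ℕ) - (a : ℕ)) (π a) = some (π b) := by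
  have key : ∀ j : ℕ, (hj : (a : ℕ) + j ≤ (b : ℕ)) →
      PCC.iterNext (coverOf E w π f hQ) j (π a) =
        some (π ⟨(a : ℕ) + j, lt_of_le_of_lt hj b.isLt⟩) := by
    intro j
    induction j with
    | zero =>
        intro hj
        exact PCC.iterNext_zero (coverOf E w π f hQ) (π a)
    | succ j ih =>
        intro hj
        have hj' : (a : ℕ) + j ≤ (b : ℕ) := by omega
        have hmid : (a : ℕ) + j < d := by omega
        have hmid1 : (a : ℕ) + j + 1 < d := by
          have := b.isLt
          omega
        have hfj : f ⟨(a : ℕ) + j, hmid⟩ = f ⟨(a : ℕ) + j + 1, hmid1⟩ := by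
          have m1 : f a ≤ f ⟨(a : ℕ) + j, hmid⟩ :=
            hQ.1 a ⟨(a : ℕ) + j, hmid⟩ (by rw [Fin.le_def]; simp)
          have m2 : f ⟨(a : ℕ) + j, hmid⟩ ≤ f ⟨(a : ℕ) + j + 1, hmid1⟩ :=
            hQ.1 _ _ (by rw [Fin.le_def]; simp)
          have m3 : f ⟨(a : ℕ) + j + 1, hmid1⟩ ≤ f b :=
            hQ.1 _ _ (by rw [Fin.le_def]; simp; omega)
          omega
        have hstep := coverOf_next_eq (E := E) (w := w) (hQ := hQ)
          (⟨(a : ℕ) + j, hmid⟩ : Fin d) hmid1 hfj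
        rw [PCC.iterNext_succ, ih hj', Option.bind_some]
        exact hstep
  have hkey := key ((b : ℕ) - (a : ℕ)) (by omega)
  rw [hkey]
  exact congrArg (fun x => some (π x))
    (Fin.ext (show (a : ℕ) + ((b : ℕ) - (a : ℕ)) = (b : ℕ) from by omega))

lemma coverOf_GCond {w : ℕ → ℕ} {π : Equiv.Perm (Fin d)} {f : Fin d → ℕ}
    (hQ : QCond (Tset E π) w f) :
    GCond (coverOf E w π f hQ) w (fun v => f (π.symm v)) := by
  refine ⟨coverOf_noCyc w π f hQ, ?_, ?_, ?_⟩
  · intro u v h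
    exact (coverOf_next_val h).2
  · intro u v h
    have h' : f (π.symm u) = f (π.symm v) := h
    rcases le_total ((π.symm u : Fin d) : ℕ) ((π.symm v : Fin d) : ℕ) with hle | hle
    · have hiter := coverOf_chain (E := E) (w := w) (hQ := hQ) hle h'
      have hconn := PCC.connRel_of_iterNext _ hiter
      rwa [Equiv.apply_symm_apply, Equiv.apply_symm_apply] at hconn
    · have hiter := coverOf_chain (E := E) (w := w) (hQ := hQ) hle h'.symm
      have hconn := PCC.connRel_of_iterNext _ hiter
      rw [Equiv.apply_symm_apply, Equiv.apply_symm_apply] at hconn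
      exact PCC.connRel_symm _ hconn
  · intro m
    exact (card_filter_equiv π.symm (fun k => f k = m)).trans (hQ.2.2 m)

/-- Number of vertices with smaller color. -/
def avOf (g : Fin d → ℕ) (v : Fin d) : ℕ :=
  ((univ : Finset (Fin d)).filter fun u => g u < g v).card

/-- The position of a vertex in the canonical listing. -/
def rhoOf (S : PCC E) (g : Fin d → ℕ) (v : Fin d) : ℕ := avOf g v + S.ht v

lemma avOf_congr {g : Fin d → ℕ} {u v : Fin d} (h : g u = g v) : avOf g u = avOf g v := by
  unfold avOf
  rw [h]

lemma rhoOf_lt {S : PCC E} {w : ℕ → ℕ} {g : Fin d → ℕ} (hg : GCond S w g) (v : Fin d) :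
    rhoOf S g v < d := by
  have h1 : S.ht v < (S.blockOf v).card := S.ht_lt_card_blockOf hg.1 v
  have h2 : ((univ : Finset (Fin d)).filter fun u => g u = g v).card = (S.blockOf v).card := by
    rw [hg.blockOf_eq_fiber v]
  have hdisj : Disjoint ((univ : Finset (Fin d)).filter fun u => g u < g v)
      ((univ : Finset (Fin d)).filter fun u => g u = g v) := by
    rw [Finset.disjoint_left]
    intro a ha hb
    rw [mem_filter] at ha hb
    omega
  have hle := Finset.card_le_card (Finset.subset_univ
    (((univ : Finset (Fin d)).filter fun u => g u < g v) ∪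
      ((univ : Finset (Fin d)).filter fun u => g u = g v)))
  rw [Finset.card_union_of_disjoint hdisj, Finset.card_univ, Fintype.card_fin] at hle
  rw [rhoOf]
  unfold avOf
  omega

lemma rhoOf_lt_of_glt {S : PCC E} {w : ℕ → ℕ} {g : Fin d → ℕ} (hg : GCond S w g)
    {u v : Fin d} (h : g u < g v) : rhoOf S g u < rhoOf S g v := by
  have h1 : S.ht u < (S.blockOf u).card := S.ht_lt_card_blockOf hg.1 u
  have h2 : ((univ : Finset (Fin d)).filter fun x => g x = g u).card = (S.blockOf u).card := by
    rw [hg.blockOf_eq_fiber u]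
  have hdisj : Disjoint ((univ : Finset (Fin d)).filter fun x => g x < g u)
      ((univ : Finset (Fin d)).filter fun x => g x = g u) := by
    rw [Finset.disjoint_left]
    intro a ha hb
    rw [mem_filter] at ha hb
    omega
  have hsub : (((univ : Finset (Fin d)).filter fun x => g x < g u) ∪
      ((univ : Finset (Fin d)).filter fun x => g x = g u)) ⊆
      ((univ : Finset (Fin d)).filter fun x => g x < g v) := by
    intro x hx
    rw [Finset.mem_union, mem_filter, mem_filter] at hx
    rw [mem_filter]
    refine ⟨mem_univ x, ?_⟩
    rcases hx with hx | hx <;> omega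
  have hcard := Finset.card_le_card hsub
  rw [Finset.card_union_of_disjoint hdisj] at hcard
  rw [rhoOf, rhoOf]
  unfold avOf at *
  omega

lemma rhoOf_inj {S : PCC E} {w : ℕ → ℕ} {g : Fin d → ℕ} (hg : GCond S w g)
    {u v : Fin d} (h : rhoOf S g u = rhoOf S g v) : u = v := by
  rcases lt_trichotomy (g u) (g v) with hlt | heq | hgt
  · exact absurd h (ne_of_lt (rhoOf_lt_of_glt hg hlt))
  · have hav := avOf_congr heq
    have hht : S.ht u = S.ht v := by
      rw [rhoOf, rhoOf, hav] at h
      omega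
    exact S.eq_of_connRel_ht hg.1 (hg.2.2.1 u v heq) hht
  · exact absurd h.symm (ne_of_lt (rhoOf_lt_of_glt hg hgt))

/-- The permutation listing the vertices by increasing color and position in their path. -/
def permOf (S : PCC E) (w : ℕ → ℕ) (g : Fin d → ℕ) (hg : GCond S w g) :
    Equiv.Perm (Fin d) :=
  (Equiv.ofBijective (fun v => (⟨rhoOf S g v, rhoOf_lt hg v⟩ : Fin d))
    (Finite.injective_iff_bijective.mp
      (fun u v h => rhoOf_inj hg (congrArg Fin.val h)))).symm

lemma permOf_symm_apply {S : PCC E} {w : ℕ → ℕ} {g : Fin d → ℕ} (hg : GCond S w g)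
    (v : Fin d) : (permOf S w g hg).symm v = ⟨rhoOf S g v, rhoOf_lt hg v⟩ := by
  rw [permOf, Equiv.symm_symm]
  rfl

lemma rho_permOf {S : PCC E} {w : ℕ → ℕ} {g : Fin d → ℕ} (hg : GCond S w g) (k : Fin d) :
    rhoOf S g (permOf S w g hg k) = (k : ℕ) := by
  have h := permOf_symm_apply hg (permOf S w g hg k)
  rw [Equiv.symm_apply_apply] at h
  exact (congrArg Fin.val h).symm

lemma permOf_mono {S : PCC E} {w : ℕ → ℕ} {g : Fin d → ℕ} (hg : GCond S w g)
    (k l : Fin d) (hkl : k ≤ l) : g (permOf S w g hg k) ≤ g (permOf S w g hg l) := by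
  by_contra hcon
  push_neg at hcon
  have hr := rhoOf_lt_of_glt hg hcon
  rw [rho_permOf hg, rho_permOf hg] at hr
  rw [Fin.le_def] at hkl
  omega

lemma next_of_geq_rho {S : PCC E} {w : ℕ → ℕ} {g : Fin d → ℕ} (hg : GCond S w g)
    {u v : Fin d} (hge : g u = g v) (hrv : rhoOf S g v = rhoOf S g u + 1) :
    S.next u = some v := by
  have hav := avOf_congr hge
  have hht : S.ht v = S.ht u + 1 := by
    rw [rhoOf, rhoOf, hav] at hrv
    omega
  exact S.next_eq_of_connRel_ht hg.1 (hg.2.2.1 u v hge) hht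

lemma permOf_QCond {S : PCC E} {w : ℕ → ℕ} {g : Fin d → ℕ} (hg : GCond S w g) :
    QCond (Tset E (permOf S w g hg)) w (fun k => g (permOf S w g hg k)) := by
  refine ⟨fun k l hkl => permOf_mono hg k l hkl, ?_, ?_⟩
  · intro k hk1 hkT
    rw [Tset, mem_filter] at hkT
    obtain ⟨-, h2, hnE⟩ := hkT
    by_contra hcon
    push_neg at hcon
    have hle : g (permOf S w g hg ⟨k, Nat.lt_of_succ_lt hk1⟩) ≤
        g (permOf S w g hg ⟨k + 1, hk1⟩) :=
      permOf_mono hg _ _ (by rw [Fin.le_def]; simp)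
    have heq : g (permOf S w g hg ⟨k, Nat.lt_of_succ_lt hk1⟩) =
        g (permOf S w g hg ⟨k + 1, hk1⟩) := by omega
    have hr1 := rho_permOf hg (⟨k, Nat.lt_of_succ_lt hk1⟩ : Fin d)
    have hr2 := rho_permOf hg (⟨k + 1, hk1⟩ : Fin d)
    have hnext := next_of_geq_rho hg heq (by rw [hr1, hr2])
    exact hnE (S.mem_edges _ _ hnext)
  · intro m
    exact (card_filter_equiv (permOf S w g hg) (fun v => g v = m)).trans (hg.2.2.2 m)

end MainBijection

section RoundTrips

variable {d : ℕ} {E : Finset (Fin d × Fin d)}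

lemma coverOf_permOf {S : PCC E} {w : ℕ → ℕ} {g : Fin d → ℕ} (hg : GCond S w g) :
    coverOf E w (permOf S w g hg) (fun k => g (permOf S w g hg k)) (permOf_QCond hg) = S := by
  apply PCC.ext'
  funext u
  set π := permOf S w g hg with hπ
  cases hnext : S.next u with
  | some v =>
      have hguv : g u = g v := hg.2.1 u v hnext
      have hht : S.ht v = S.ht u + 1 := S.ht_next hg.1 hnext
      have hrv : rhoOf S g v = rhoOf S g u + 1 := by
        rw [rhoOf, rhoOf, avOf_congr hguv, hht]
        omega
      have hsymmu : π.symm u = ⟨rhoOf S g u, rhoOf_lt hg u⟩ := permOf_symm_apply hg u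
      have hsymmv : π.symm v = ⟨rhoOf S g v, rhoOf_lt hg v⟩ := permOf_symm_apply hg v
      have hl : ((π.symm u : Fin d) : ℕ) + 1 < d := by
        rw [hsymmu]
        show rhoOf S g u + 1 < d
        rw [← hrv]
        exact rhoOf_lt hg v
      have hmk : (⟨((π.symm u : Fin d) : ℕ) + 1, hl⟩ : Fin d) = π.symm v := by
        apply Fin.ext
        rw [hsymmv]
        show ((π.symm u : Fin d) : ℕ) + 1 = rhoOf S g v
        rw [hsymmu, hrv]
      have hf : (fun k => g (π k)) (π.symm u) =
          (fun k => g (π k)) ⟨((π.symm u : Fin d) : ℕ) + 1, hl⟩ := by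
        show g (π (π.symm u)) = g (π ⟨((π.symm u : Fin d) : ℕ) + 1, hl⟩)
        rw [Equiv.apply_symm_apply, hmk, Equiv.apply_symm_apply]
        exact hguv
      have hstep := coverOf_next_eq (E := E) (w := w) (hQ := permOf_QCond hg)
        (π.symm u) hl hf
      rw [Equiv.apply_symm_apply] at hstep
      rw [hstep, hmk, Equiv.apply_symm_apply]
  | none =>
      refine dif_neg ?_
      rintro ⟨hl, hf⟩
      have hf' : g (π (π.symm u)) = g (π ⟨((π.symm u : Fin d) : ℕ) + 1, hl⟩) := hf
      rw [Equiv.apply_symm_apply] at hf'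
      have h1 := rho_permOf hg (⟨((π.symm u : Fin d) : ℕ) + 1, hl⟩ : Fin d)
      have h1' : rhoOf S g (π ⟨((π.symm u : Fin d) : ℕ) + 1, hl⟩) =
          ((π.symm u : Fin d) : ℕ) + 1 := h1
      have h2 : ((π.symm u : Fin d) : ℕ) = rhoOf S g u := by
        rw [permOf_symm_apply hg u]
      have hnext' := next_of_geq_rho hg hf' (by rw [h1', h2])
      rw [hnext] at hnext'
      simp at hnext'

lemma permOf_coverOf {w : ℕ → ℕ} {π : Equiv.Perm (Fin d)} {f : Fin d → ℕ}
    (hQ : QCond (Tset E π) w f) :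
    permOf (coverOf E w π f hQ) w (fun v => f (π.symm v)) (coverOf_GCond hQ) = π := by
  set S := coverOf E w π f hQ with hS
  set g : Fin d → ℕ := fun v => f (π.symm v) with hgdef
  have hg : GCond S w g := coverOf_GCond hQ
  have key : ∀ k : Fin d, rhoOf S g (π k) = (k : ℕ) := by
    intro k
    set c := ((univ : Finset (Fin d)).filter fun x => f x < f k).card with hcdef
    have hck : c ≤ (k : ℕ) := by
      by_contra hcon
      push_neg at hcon
      exact lt_irrefl _ ((lt_countLT_iff hQ.1 k k).mpr hcon)
    have hcd : c < d := lt_of_le_of_lt hck k.isLt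
    have hfc : f ⟨c, hcd⟩ = f k := by
      have h1 : ¬ f (⟨c, hcd⟩ : Fin d) < f k := by
        intro h
        have h2 := (lt_countLT_iff hQ.1 k ⟨c, hcd⟩).mp h
        rw [← hcdef] at h2
        exact lt_irrefl c h2
      have h2 : f (⟨c, hcd⟩ : Fin d) ≤ f k := hQ.1 ⟨c, hcd⟩ k (by rw [Fin.le_def]; exact hck)
      omega
    have hav : avOf g (π k) = c := by
      have hgk : g (π k) = f k := by
        show f (π.symm (π k)) = f k
        rw [Equiv.symm_apply_apply]
      have havrw : avOf g (π k) = ((univ : Finset (Fin d)).filter fun u => g u < f k).card := by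
        unfold avOf
        rw [hgk]
      rw [havrw, hcdef]
      exact card_filter_equiv π.symm (fun x => f x < f k)
    have hht : S.ht (π k) = (k : ℕ) - c := by
      have hchain : PCC.iterNext S ((k : ℕ) - c) (π ⟨c, hcd⟩) = some (π k) :=
        coverOf_chain (E := E) (w := w) (hQ := hQ) (a := ⟨c, hcd⟩) (b := k) hck hfc
      have hiter : S.ht (π k) = S.ht (π ⟨c, hcd⟩) + ((k : ℕ) - c) :=
        S.ht_iterNext hg.1 hchain
      have hzero : S.ht (π ⟨c, hcd⟩) = 0 := by
        show ((univ : Finset (Fin d)).filter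
          fun u => ∃ n, 0 < n ∧ PCC.iterNext S n u = some (π ⟨c, hcd⟩)).card = 0
        rw [Finset.card_eq_zero, Finset.filter_eq_empty_iff]
        rintro u - ⟨n, hn, hiter'⟩
        obtain ⟨n', rfl⟩ : ∃ m, n = m + 1 := ⟨n - 1, by omega⟩
        rw [PCC.iterNext_succ] at hiter'
        obtain ⟨z, hz, hznext⟩ := Option.bind_eq_some_iff.mp hiter'
        have hval := (coverOf_next_val (E := E) hznext).1
        have hfz := (coverOf_next_val (E := E) hznext).2
        rw [Equiv.symm_apply_apply] at hval hfz
        have hval' : c = ((π.symm z : Fin d) : ℕ) + 1 := hval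
        have hlt : ((π.symm z : Fin d) : ℕ) < c := by omega
        have hflt : f (π.symm z) < f k := by
          refine (lt_countLT_iff hQ.1 k (π.symm z)).mpr ?_
          rw [← hcdef]
          exact hlt
        rw [hfz, hfc] at hflt
        exact lt_irrefl _ hflt
      omega
    rw [rhoOf, hav, hht]
    omega
  have hsymm_eq : (permOf S w g hg).symm = π.symm := by
    apply Equiv.ext
    intro v
    rw [permOf_symm_apply hg v]
    apply Fin.ext
    show rhoOf S g v = ((π.symm v : Fin d) : ℕ)
    conv_lhs => rw [← Equiv.apply_symm_apply π v]
    exact key (π.symm v)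
  have h2 : permOf S w g hg = π := by
    have h3 := congrArg Equiv.symm hsymm_eq
    rwa [Equiv.symm_symm, Equiv.symm_symm] at h3
  exact h2

/-- The central bijection: pairs (path cover, proper coloring) correspond to pairs
(permutation, `P`-partition of the corresponding descent set). -/
def mainEquiv (E : Finset (Fin d × Fin d)) (w : ℕ → ℕ) :
    {p : PCC E × (Fin d → ℕ) // GCond p.1 w p.2} ≃
      {q : Equiv.Perm (Fin d) × (Fin d → ℕ) // QCond (Tset E q.1) w q.2} where
  toFun p := ⟨(permOf p.1.1 w p.1.2 p.2, fun k => p.1.2 (permOf p.1.1 w p.1.2 p.2 k)),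
    permOf_QCond p.2⟩
  invFun q := ⟨(coverOf E w q.1.1 q.1.2 q.2, fun v => q.1.2 (q.1.1.symm v)),
    coverOf_GCond q.2⟩
  left_inv p := by
    apply Subtype.ext
    refine Prod.ext ?_ ?_
    · exact coverOf_permOf p.2
    · funext v
      show p.1.2 (permOf p.1.1 w p.1.2 p.2 ((permOf p.1.1 w p.1.2 p.2).symm v)) = p.1.2 v
      rw [Equiv.apply_symm_apply]
  right_inv q := by
    apply Subtype.ext
    have hπ : permOf (coverOf E w q.1.1 q.1.2 q.2) w (fun v => q.1.2 (q.1.1.symm v))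
        (coverOf_GCond q.2) = q.1.1 := permOf_coverOf q.2
    refine Prod.ext hπ ?_
    funext k
    show q.1.2 (q.1.1.symm (permOf (coverOf E w q.1.1 q.1.2 q.2) w
      (fun v => q.1.2 (q.1.1.symm v)) (coverOf_GCond q.2) k)) = q.1.2 k
    rw [hπ, Equiv.symm_apply_apply]

end RoundTrips

/-- If `D` is a digraph with vertex set `{0, …, d-1}` then
`Ξ_D(x;0) = ∑_{π ∈ S_d} Q_{S(π),d}(x)`. -/
theorem xi_path_quasisymmetric_expansion (d : ℕ) (E : Finset (Fin d × Fin d)) :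
    setY0 (Xi E) =
      ∑ π : Equiv.Perm (Fin d), Qfun (Sum.inl : ℕ → ℕ ⊕ ℕ) (Tset E π) d := by
  funext c
  have hsum : (∑ π : Equiv.Perm (Fin d), Qfun (Sum.inl : ℕ → ℕ ⊕ ℕ) (Tset E π) d) c
      = ∑ π : Equiv.Perm (Fin d), Qfun (Sum.inl : ℕ → ℕ ⊕ ℕ) (Tset E π) d c := by
    have h := map_sum (MvPowerSeries.coeff c)
      (fun π : Equiv.Perm (Fin d) => Qfun (Sum.inl : ℕ → ℕ ⊕ ℕ) (Tset E π) d) univ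
    exact h
  rw [hsum]
  by_cases hc : ∀ s ∈ c.support, s.isLeft = true
  · rw [setY0_Xi_coeff E c hc]
    set w : ℕ → ℕ := fun m => c (Sum.inl m) with hw
    set Wf : Finset ℕ := c.support.image (Sum.elim id id) with hWfdef
    have hWf : ∀ m, m ∈ Wf ↔ w m ≠ 0 := mem_Wf_iff c hc
    have hshape : expShape c = Wf.val.map w := expShape_eq_Wf c hc
    haveI hfin1 : ∀ S : PCC E, Finite {g : Fin d → ℕ // GCond S w g} :=
      fun S => finite_GCond S w Wf hWf
    haveI hfin2 : ∀ π : Equiv.Perm (Fin d), Finite {f : Fin d → ℕ // QCond (Tset E π) w f} :=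
      fun π => finite_QCond (Tset E π) w Wf hWf
    have hL : ∀ S : PCC E,
        (if S.cycleType = 0 ∧ expShape c = S.pathType then (rfact S.pathType : ℚ) else 0)
          = (Nat.card {g : Fin d → ℕ // GCond S w g} : ℚ) := by
      intro S
      rw [card_GCond S w Wf hWf, hshape]
    have hR : ∀ π : Equiv.Perm (Fin d),
        Qfun (Sum.inl : ℕ → ℕ ⊕ ℕ) (Tset E π) d c
          = (Nat.card {f : Fin d → ℕ // QCond (Tset E π) w f} : ℚ) := fun π =>
      Qfun_coeff (Tset E π) c hc
    rw [Finset.sum_congr rfl fun S _ => hL S, Finset.sum_congr rfl fun π _ => hR π]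
    rw [← Nat.cast_sum, ← Nat.cast_sum]
    congr 1
    rw [← natCard_sigma' (fun S : PCC E => {g : Fin d → ℕ // GCond S w g}),
      ← natCard_sigma' (fun π : Equiv.Perm (Fin d) => {f : Fin d → ℕ // QCond (Tset E π) w f})]
    apply Nat.card_congr
    exact ((Equiv.subtypeProdEquivSigmaSubtype
        (fun (S : PCC E) (g : Fin d → ℕ) => GCond S w g)).symm.trans
      (mainEquiv E w)).trans
      (Equiv.subtypeProdEquivSigmaSubtype
        (fun (π : Equiv.Perm (Fin d)) (f : Fin d → ℕ) => QCond (Tset E π) w f))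
  · have hL : setY0 (Xi E) c = 0 := by rw [setY0, if_neg hc]
    rw [hL]
    symm
    apply Finset.sum_eq_zero
    intro π _
    rw [Qfun, if_neg]
    intro hcon
    exact hc (fun s hs => (isLeft_iff_exists s).mp (hcon s hs))
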